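/- arXiv:2202.09922 — 4 statements merged into one kernel-verified Lean document; each statement's English description precedes it below -/
import Mathlib

section
/- Let p be a prime, l ≥ 1 and d ≥ 1 integers, and let f : ℤ_p → ℚ_p be a nonzero analytic function having no root in ℤ_p. Then: (i) the integer-valued sequence (ν_{p^l}(f(n)))_{n≥0} is purely periodic with some power of p as a period; (ii) if f is a polynomial, the sequence (ℒ_{p^l}(f(n)))_{n≥0} (values in the ℤ-module ℤ_p) is k-regular for every integer k ≥ 2; (iii) the sequence (ℓ_{p^l,d}(f(n)))_{n≥0} (values in ℤ/p^{ld}ℤ) is purely periodic with some power of p as a period. -/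
/-- The `k`-kernel of a sequence: the set of subsequences `n ↦ a (k^i·n + j)`
for `i ≥ 0` and `0 ≤ j ≤ k^i - 1`. -/
def kKernel {R : Type*} (k : ℕ) (a : ℕ → R) : Set (ℕ → R) :=
  {c | ∃ i j : ℕ, j < k ^ i ∧ c = fun n => a (k ^ i * n + j)}

/-- A sequence is `k`-automatic if its `k`-kernel is a finite set. -/
def IsKAutomatic {R : Type*} (k : ℕ) (a : ℕ → R) : Prop :=
  (kKernel k a).Finite

/-- A sequence with values in a `ℤ`-module is `k`-regular if the `ℤ`-submodule
of the module of all sequences generated by its `k`-kernel is finitely generated. -/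
def IsKRegular {R : Type*} [AddCommGroup R] (k : ℕ) (a : ℕ → R) : Prop :=
  (Submodule.span ℤ (kKernel k a)).FG

/-- `k` and `m` are multiplicatively independent if `k^a = m^b` forces `a = b = 0`. -/
def MultiplicativelyIndependent (k m : ℕ) : Prop :=
  ∀ a b : ℕ, k ^ a = m ^ b → a = 0 ∧ b = 0

/-- Strictly `k`-regular: `k`-regular but not `m`-regular for every `m ≥ 2`
multiplicatively independent of `k`. -/
def StrictlyKRegular {R : Type*} [AddCommGroup R] (k : ℕ) (a : ℕ → R) : Prop :=
  IsKRegular k a ∧ ∀ m : ℕ, 2 ≤ m → MultiplicativelyIndependent k m → ¬ IsKRegular m a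

/-- Strictly `k`-automatic: `k`-automatic but not `m`-automatic for every `m ≥ 2`
multiplicatively independent of `k`. -/
def StrictlyKAutomatic {R : Type*} (k : ℕ) (a : ℕ → R) : Prop :=
  IsKAutomatic k a ∧ ∀ m : ℕ, 2 ≤ m → MultiplicativelyIndependent k m → ¬ IsKAutomatic m a

/-- `f : ℤ_p → ℚ_p` is analytic if it is given by a power series converging
(to `f x`) at every point `x ∈ ℤ_p`. -/
def IsPadicAnalytic {p : ℕ} [Fact p.Prime] (f : ℤ_[p] → ℚ_[p]) : Prop :=
  ∃ c : ℕ → ℚ_[p], ∀ x : ℤ_[p], HasSum (fun i => c i * (x : ℚ_[p]) ^ i) (f x)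

/-- The set of roots of `f` in `ℤ_p`. -/
def padicRootSet {p : ℕ} [Fact p.Prime] (f : ℤ_[p] → ℚ_[p]) : Set ℤ_[p] :=
  {θ | f θ = 0}

/-- A `p`-adic integer is rational if it is the image of a rational number. -/
def IsRationalPadicInt {p : ℕ} [Fact p.Prime] (θ : ℤ_[p]) : Prop :=
  ∃ q : ℚ, (θ : ℚ_[p]) = (q : ℚ_[p])

/-- `θ` is a root of `f` of multiplicity `m`:
`f x = (x - θ)^m · g x` with `g` analytic and `g θ ≠ 0`. -/
def HasRootMultiplicity {p : ℕ} [Fact p.Prime] (f : ℤ_[p] → ℚ_[p]) (θ : ℤ_[p]) (m : ℕ) : Prop :=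
  ∃ g : ℤ_[p] → ℚ_[p], IsPadicAnalytic g ∧ g θ ≠ 0 ∧
    ∀ x : ℤ_[p], f x = ((x : ℚ_[p]) - (θ : ℚ_[p])) ^ m * g x

/-- `ν_{p^l}(x) = ⌊ν_p(x)/l⌋` (with junk value `0` at `x = 0`). -/
noncomputable def nuPow (p : ℕ) [Fact p.Prime] (l : ℕ) (x : ℚ_[p]) : ℤ :=
  x.valuation / (l : ℤ)

open Classical in
/-- `ℒ_{p^l}(x) = p^{-l·ν_{p^l}(x)}·x ∈ ℤ_p`, with `ℒ_{p^l}(0) = 0`. -/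
noncomputable def padicL (p : ℕ) [hp : Fact p.Prime] (l : ℕ) (x : ℚ_[p]) : ℤ_[p] :=
  if h : x = 0 ∨ l = 0 then 0
  else ⟨(p : ℚ_[p]) ^ (-((l : ℤ) * nuPow p l x)) * x, by
    push_neg at h
    obtain ⟨hx, hl⟩ := h
    have hp0 : (p : ℚ_[p]) ≠ 0 := Nat.cast_ne_zero.mpr hp.out.ne_zero
    have hz : (p : ℚ_[p]) ^ (-((l : ℤ) * nuPow p l x)) ≠ 0 := zpow_ne_zero _ hp0
    rw [Padic.norm_le_one_iff_val_nonneg, Padic.valuation_mul hz hx]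
    have hvz : ((p : ℚ_[p]) ^ (-((l : ℤ) * nuPow p l x))).valuation
        = -((l : ℤ) * nuPow p l x) := by
      have h1 : ‖(p : ℚ_[p]) ^ (-((l : ℤ) * nuPow p l x))‖
          = (p : ℝ) ^ (-(-((l : ℤ) * nuPow p l x))) := Padic.norm_p_zpow _
      rw [Padic.norm_eq_zpow_neg_valuation hz] at h1
      have h1p : 1 < (p : ℝ) := by exact_mod_cast hp.out.one_lt
      have := (zpow_right_strictMono₀ h1p).injective h1
      omega
    rw [hvz, nuPow]
    have hl' : (0 : ℤ) < (l : ℤ) := by exact_mod_cast Nat.pos_of_ne_zero hl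
    have := Int.emod_nonneg x.valuation (by exact_mod_cast hl : (l : ℤ) ≠ 0)
    have heq := Int.emod_add_mul_ediv x.valuation (l : ℤ)
    omega⟩

/-- `ℓ_{p^l,d}(x) = ℒ_{p^l}(x) mod p^{ld} ∈ ℤ/p^{ld}ℤ`. -/
noncomputable def padicEll (p : ℕ) [Fact p.Prime] (l d : ℕ) (x : ℚ_[p]) : ZMod (p ^ (l * d)) :=
  PadicInt.toZModPow (l * d) (padicL p l x)

/-- A sequence is eventually periodic. -/
def EventuallyPeriodic {R : Type*} (a : ℕ → R) : Prop :=
  ∃ T : ℕ, 1 ≤ T ∧ ∃ N : ℕ, ∀ n : ℕ, N ≤ n → a (n + T) = a n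

/-!
An analytic `f : ℤ_p → ℚ_p` is Lipschitz (its coefficients tend to `0`, and
`‖x ^ i - y ^ i‖ ≤ ‖x - y‖` on `ℤ_p`), and if it has no root it is bounded away from `0`
by compactness. So for every `M` there is `t` with `‖f x - f y‖ < p ^ (-M) * ‖f x‖`
whenever `x ≡ y mod p ^ t`: then `f x` and `f y` have the same valuation and
`ℒ_{p^l}(f x) ≡ ℒ_{p^l}(f y) mod p ^ M`. For polynomial `f` this gives
`ℒ_{p^l}(f n) = c (n mod p ^ t) * f n`, and the binomial expansion of `f (k ^ i * n + j)`
puts the whole `k`-kernel into the `ℤ`-span of the finitely many sequences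
`n ↦ [n ≡ u mod p ^ t] * v * F.coeff s * n ^ m`.
-/

open Filter Polynomial Topology
open scoped Pointwise

theorem kKernel_comp {R S : Type*} (φ : R → S) (k : ℕ) (a : ℕ → R) :
    kKernel k (φ ∘ a) = (φ ∘ ·) '' kKernel k a := by
  ext c
  simp only [kKernel, Set.mem_ofPred_eq, Set.mem_image]
  constructor
  · rintro ⟨i, j, hj, rfl⟩
    exact ⟨_, ⟨i, j, hj, rfl⟩, rfl⟩
  · rintro ⟨_, ⟨i, j, hj, rfl⟩, rfl⟩
    exact ⟨i, j, hj, rfl⟩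

theorem IsKRegular.of_comp_injective {R S : Type*} [AddCommGroup R] [AddCommGroup S]
    {k : ℕ} {a : ℕ → R} (φ : R →+ S) (hφ : Function.Injective φ)
    (h : IsKRegular k (φ ∘ a)) : IsKRegular k a := by
  let L : (ℕ → R) →ₗ[ℤ] (ℕ → S) := φ.toIntLinearMap.compLeft ℕ
  have hL : Function.Injective L := fun u v huv => funext fun n => hφ (congrFun huv n)
  refine Submodule.fg_of_fg_map_injective L hL ?_
  rw [Submodule.map_span]
  exact kKernel_comp φ k a ▸ h

theorem isKRegular_of_kKernel_subset_span {R : Type*} [AddCommGroup R] {k : ℕ} {a : ℕ → R}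
    {S : Set (ℕ → R)} (hS : S.Finite) (h : kKernel k a ⊆ Submodule.span ℤ S) :
    IsKRegular k a :=
  (Submodule.fg_span hS).of_le (Submodule.span_le.mpr h)

section

variable {K : Type*} [CommRing K]

theorem mem_span_indicator_mod {P : ℕ} (hP : 0 < P) {C : Set K} (e : ℕ → K)
    (he : ∀ r < P, e r ∈ C) :
    (fun n => e (n % P)) ∈ Submodule.span ℤ
      (Set.image2 (fun u v n => if n % P = u then v else 0) (Set.Iio P) C) := by
  have hsum : (fun n => e (n % P)) =
      ∑ u ∈ Finset.range P, fun n => if n % P = u then e u else 0 := by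
    funext n
    simp [Finset.sum_apply, Nat.mod_lt n hP]
  rw [hsum]
  refine Submodule.sum_mem _ fun u hu => Submodule.subset_span ?_
  have hu : u < P := Finset.mem_range.mp hu
  exact Set.mem_image2_of_mem hu (he u hu)

theorem eval_affine_mem_span (F : K[X]) (a b : ℕ) :
    (fun n : ℕ => F.eval ((a * n + b : ℕ) : K)) ∈ Submodule.span ℤ
      (Set.image2 (fun s m (n : ℕ) => F.coeff s * (n : K) ^ m)
        (Set.Iic F.natDegree) (Set.Iic F.natDegree)) := by
  have hsum : (fun n : ℕ => F.eval ((a * n + b : ℕ) : K)) =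
      ∑ s ∈ Finset.range (F.natDegree + 1), ∑ m ∈ Finset.range (s + 1),
        (a ^ m * b ^ (s - m) * s.choose m) • fun n : ℕ => F.coeff s * (n : K) ^ m := by
    funext n
    simp only [Finset.sum_apply, Pi.smul_apply]
    simp only [nsmul_eq_mul, eval_eq_sum_range]
    simp only [Nat.cast_add, Nat.cast_mul, add_pow, Finset.mul_sum]
    refine Finset.sum_congr rfl fun s _ => Finset.sum_congr rfl fun m _ => ?_
    push_cast
    ring
  rw [hsum]
  refine Submodule.sum_mem _ fun s hs => Submodule.sum_mem _ fun m hm => ?_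
  simp only [Finset.mem_range] at hs hm
  exact nsmul_mem (Submodule.subset_span (Set.mem_image2_of_mem
    (Set.mem_Iic.mpr (by omega)) (Set.mem_Iic.mpr (by omega)))) _

theorem isKRegular_mod_mul_eval (k : ℕ) {P : ℕ} (hP : 0 < P) (c : ℕ → K) (F : K[X]) :
    IsKRegular k (fun n => c (n % P) * F.eval (n : K)) := by
  set W := Set.image2 (fun u v (n : ℕ) => if n % P = u then v else 0)
    (Set.Iio P) (c '' Set.Iio P)
  set G := Set.image2 (fun s m (n : ℕ) => F.coeff s * (n : K) ^ m)
    (Set.Iic F.natDegree) (Set.Iic F.natDegree)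
  have hW : W.Finite := (Set.finite_Iio P).image2 _ ((Set.finite_Iio P).image c)
  have hG : G.Finite := (Set.finite_Iic _).image2 _ (Set.finite_Iic _)
  refine isKRegular_of_kKernel_subset_span (hW.mul hG) ?_
  rintro _ ⟨i, j, -, rfl⟩
  rw [SetLike.mem_coe, ← Submodule.span_mul_span ℤ W G]
  have hfactor : (fun n => c ((k ^ i * n + j) % P) * F.eval ((k ^ i * n + j : ℕ) : K)) =
      (fun n => c ((k ^ i * (n % P) + j) % P)) * fun n => F.eval ((k ^ i * n + j : ℕ) : K) := by
    funext n
    have hmod := ((Nat.mod_modEq n P).mul_left (k ^ i)).add_right j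
    unfold Nat.ModEq at hmod
    rw [Pi.mul_apply, hmod]
  rw [hfactor]
  exact Submodule.mul_mem_mul
    (mem_span_indicator_mod hP (fun r => c ((k ^ i * r + j) % P))
      fun r _ => Set.mem_image_of_mem c (Nat.mod_lt _ hP))
    (eval_affine_mem_span F _ _)

end

section Padic

variable {p : ℕ} [hp : Fact p.Prime]

theorem PadicInt.norm_natCast_sub_le_of_modEq {a b t : ℕ} (h : a ≡ b [MOD p ^ t]) :
    ‖(a : ℤ_[p]) - b‖ ≤ (p : ℝ) ^ (-t : ℤ) := by
  rw [PadicInt.norm_le_pow_iff_mem_span_pow, Ideal.mem_span_singleton]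
  exact_mod_cast Int.cast_dvd_cast (α := ℤ_[p]) _ _ (Nat.modEq_iff_dvd.mp h.symm)

theorem PadicInt.norm_pow_sub_pow_le (x y : ℤ_[p]) (i : ℕ) : ‖x ^ i - y ^ i‖ ≤ ‖x - y‖ := by
  rw [← geom_sum₂_mul x y i, norm_mul]
  exact mul_le_of_le_one_left (norm_nonneg _) (PadicInt.norm_le_one _)

theorem PadicInt.toZModPow_eq_of_norm_sub_le {x y : ℤ_[p]} {n : ℕ}
    (h : ‖x - y‖ ≤ (p : ℝ) ^ (-n : ℤ)) : toZModPow n x = toZModPow n y := by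
  rw [← sub_eq_zero, ← map_sub, ← RingHom.mem_ker, ker_toZModPow]
  exact (norm_le_pow_iff_mem_span_pow _ _).mp h

theorem Padic.valuation_eq_of_norm_eq {x y : ℚ_[p]} (hx : x ≠ 0) (hy : y ≠ 0) (h : ‖x‖ = ‖y‖) :
    x.valuation = y.valuation := by
  rw [norm_eq_zpow_neg_valuation hx, norm_eq_zpow_neg_valuation hy] at h
  have hp1 : (1 : ℝ) < p := by exact_mod_cast hp.out.one_lt
  exact neg_inj.mp (zpow_right_injective₀ (by positivity) hp1.ne' h)

theorem nuPow_eq_of_norm_sub_lt {l : ℕ} {x y : ℚ_[p]} (h : ‖x - y‖ < ‖x‖) :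
    nuPow p l y = nuPow p l x := by
  have hxy : ‖x‖ = ‖y‖ := Padic.norm_eq_of_norm_sub_lt_left h
  have hx : x ≠ 0 := norm_pos_iff.mp ((norm_nonneg _).trans_lt h)
  have hy : y ≠ 0 := norm_pos_iff.mp (hxy ▸ (norm_nonneg _).trans_lt h)
  rw [nuPow, nuPow, Padic.valuation_eq_of_norm_eq hy hx hxy.symm]

theorem coe_padicL {l : ℕ} (hl : l ≠ 0) {x : ℚ_[p]} (hx : x ≠ 0) :
    (padicL p l x : ℚ_[p]) = (p : ℚ_[p]) ^ (-((l : ℤ) * nuPow p l x)) * x := by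
  have h : ¬(x = 0 ∨ l = 0) := by tauto
  unfold padicL
  exact congrArg (fun z : ℤ_[p] => (z : ℚ_[p])) (dif_neg h)

theorem norm_padicL_sub_lt {l M : ℕ} (hl : l ≠ 0) {x y : ℚ_[p]}
    (h : ‖x - y‖ < (p : ℝ) ^ (-M : ℤ) * ‖x‖) :
    ‖padicL p l x - padicL p l y‖ < (p : ℝ) ^ (-M : ℤ) := by
  have hp1 : (1 : ℝ) < p := by exact_mod_cast hp.out.one_lt
  have hle : (p : ℝ) ^ (-M : ℤ) * ‖x‖ ≤ ‖x‖ :=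
    mul_le_of_le_one_left (norm_nonneg _) (zpow_le_one_of_nonpos₀ hp1.le (by omega))
  have hν : nuPow p l y = nuPow p l x := nuPow_eq_of_norm_sub_lt (h.trans_le hle)
  have hx : x ≠ 0 := norm_pos_iff.mp ((norm_nonneg _).trans_lt (h.trans_le hle))
  have hy : y ≠ 0 := by
    rintro rfl
    rw [sub_zero] at h
    exact h.not_ge hle
  set s : ℚ_[p] := (p : ℚ_[p]) ^ (-((l : ℤ) * nuPow p l x))
  have hs : 0 < ‖s‖ := norm_pos_iff.mpr (zpow_ne_zero _ (by exact_mod_cast hp.out.ne_zero))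
  rw [PadicInt.norm_def, PadicInt.coe_sub, coe_padicL hl hx, coe_padicL hl hy, hν, ← mul_sub,
    norm_mul]
  calc ‖s‖ * ‖x - y‖ < ‖s‖ * ((p : ℝ) ^ (-M : ℤ) * ‖x‖) := mul_lt_mul_of_pos_left h hs
    _ = (p : ℝ) ^ (-M : ℤ) * ‖padicL p l x‖ := by
      rw [PadicInt.norm_def, coe_padicL hl hx, norm_mul]
      ring
    _ ≤ (p : ℝ) ^ (-M : ℤ) := mul_le_of_le_one_right (by positivity) (PadicInt.norm_le_one _)

end Padic

theorem exists_pos_le_norm_of_ne_zero {X E : Type*} [TopologicalSpace X] [CompactSpace X]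
    [Nonempty X] [NormedAddCommGroup E] {f : X → E} (hf : Continuous f) (h0 : ∀ x, f x ≠ 0) :
    ∃ ε > 0, ∀ x, ε ≤ ‖f x‖ := by
  obtain ⟨x₀, -, hx₀⟩ :=
    isCompact_univ.exists_isMinOn Set.univ_nonempty (continuous_norm.comp hf).continuousOn
  exact ⟨‖f x₀‖, norm_pos_iff.mpr (h0 x₀), fun x => hx₀ (Set.mem_univ x)⟩

namespace IsPadicAnalytic

variable {p : ℕ} [Fact p.Prime] {f : ℤ_[p] → ℚ_[p]}

theorem exists_lipschitzWith (hf : IsPadicAnalytic f) : ∃ C, LipschitzWith C f := by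
  obtain ⟨c, hc⟩ := hf
  have hbdd : BddAbove (Set.range fun i => ‖c i‖₊) := by
    have hsum : Summable c := by simpa using (hc 1).summable
    exact hsum.tendsto_atTop_zero.nnnorm.bddAbove_range
  refine ⟨⨆ i, ‖c i‖₊, LipschitzWith.of_dist_le_mul fun x y => ?_⟩
  rw [dist_eq_norm, dist_eq_norm, ← ((hc x).sub (hc y)).tsum_eq]
  refine IsUltrametricDist.norm_tsum_le_of_forall_le_of_nonneg (by positivity) fun i => ?_
  have hterm : c i * (x : ℚ_[p]) ^ i - c i * (y : ℚ_[p]) ^ i =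
      c i * ((x ^ i - y ^ i : ℤ_[p]) : ℚ_[p]) := by
    push_cast
    ring
  rw [hterm, norm_mul, ← PadicInt.norm_def]
  exact mul_le_mul (le_ciSup hbdd i) (PadicInt.norm_pow_sub_pow_le x y i) (norm_nonneg _)
    (by positivity)

theorem continuous (hf : IsPadicAnalytic f) : Continuous f :=
  hf.exists_lipschitzWith.choose_spec.continuous

theorem exists_norm_sub_lt (hf : IsPadicAnalytic f) (hroot : ∀ θ, f θ ≠ 0) (M : ℕ) :
    ∃ t : ℕ, ∀ x y : ℤ_[p], ‖x - y‖ ≤ (p : ℝ) ^ (-t : ℤ) →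
      ‖f x - f y‖ < (p : ℝ) ^ (-M : ℤ) * ‖f x‖ := by
  obtain ⟨C, hC⟩ := hf.exists_lipschitzWith
  obtain ⟨ε, hε, hmin⟩ := exists_pos_le_norm_of_ne_zero hf.continuous hroot
  have hp1 : (1 : ℝ) < p := by exact_mod_cast (Fact.out : p.Prime).one_lt
  have htend : Tendsto (fun t : ℕ => (C : ℝ) * (p : ℝ) ^ (-t : ℤ)) atTop (𝓝 0) := by
    simpa using (tendsto_pow_atTop_nhds_zero_of_lt_one (by positivity)
      (inv_lt_one_of_one_lt₀ hp1)).const_mul (C : ℝ)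
  have hpos : 0 < (p : ℝ) ^ (-M : ℤ) * ε := by positivity
  obtain ⟨t, ht⟩ := (htend.eventually (gt_mem_nhds hpos)).exists
  refine ⟨t, fun x y hxy => ?_⟩
  calc ‖f x - f y‖ ≤ C * ‖x - y‖ := by simpa [dist_eq_norm] using hC.dist_le_mul x y
    _ ≤ C * (p : ℝ) ^ (-t : ℤ) := by gcongr
    _ < (p : ℝ) ^ (-M : ℤ) * ε := ht
    _ ≤ (p : ℝ) ^ (-M : ℤ) * ‖f x‖ := by gcongr; exact hmin x

theorem exists_modEq_norm_sub_lt (hf : IsPadicAnalytic f) (hroot : ∀ θ, f θ ≠ 0) (M : ℕ) :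
    ∃ t : ℕ, ∀ a b : ℕ, a ≡ b [MOD p ^ t] →
      ‖f a - f b‖ < (p : ℝ) ^ (-M : ℤ) * ‖f a‖ := by
  obtain ⟨t, ht⟩ := hf.exists_norm_sub_lt hroot M
  exact ⟨t, fun a b hab => ht _ _ (PadicInt.norm_natCast_sub_le_of_modEq hab)⟩

end IsPadicAnalytic

theorem statement12_general (p : ℕ) [Fact p.Prime] (l d : ℕ) (hl : 1 ≤ l)
    (f : ℤ_[p] → ℚ_[p]) (hfa : IsPadicAnalytic f)
    (hroot : ∀ θ : ℤ_[p], f θ ≠ 0) :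
    (∃ t : ℕ, ∀ n : ℕ,
      nuPow p l (f ((n + p ^ t : ℕ) : ℤ_[p])) = nuPow p l (f (n : ℤ_[p]))) ∧
    ((∃ F : Polynomial ℚ_[p], ∀ x : ℤ_[p], f x = F.eval (x : ℚ_[p])) →
      ∀ k : ℕ, 2 ≤ k → IsKRegular k (fun n : ℕ => padicL p l (f (n : ℤ_[p])))) ∧
    (∃ t : ℕ, ∀ n : ℕ,
      padicEll p l d (f ((n + p ^ t : ℕ) : ℤ_[p])) = padicEll p l d (f (n : ℤ_[p]))) := by
  have hl0 : l ≠ 0 := by omega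
  obtain ⟨t₀, ht₀⟩ := hfa.exists_modEq_norm_sub_lt hroot 0
  obtain ⟨t₁, ht₁⟩ := hfa.exists_modEq_norm_sub_lt hroot (l * d)
  have hnu : ∀ a b : ℕ, a ≡ b [MOD p ^ t₀] → nuPow p l (f b) = nuPow p l (f a) := fun a b hab =>
    nuPow_eq_of_norm_sub_lt (by simpa using ht₀ a b hab)
  refine ⟨⟨t₀, fun n => hnu _ _ (Nat.add_mod_right n (p ^ t₀)).symm⟩, ?_,
    ⟨t₁, fun n => (PadicInt.toZModPow_eq_of_norm_sub_le
      (norm_padicL_sub_lt hl0 (ht₁ _ _ (Nat.add_mod_right n (p ^ t₁)).symm)).le).symm⟩⟩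
  rintro ⟨F, hF⟩ k -
  refine IsKRegular.of_comp_injective (PadicInt.Coe.ringHom : ℤ_[p] →+* ℚ_[p]).toAddMonoidHom
    Subtype.val_injective ?_
  have hseq : (PadicInt.Coe.ringHom : ℤ_[p] →+* ℚ_[p]).toAddMonoidHom ∘
      (fun n : ℕ => padicL p l (f n)) =
      fun n => (p : ℚ_[p]) ^ (-((l : ℤ) * nuPow p l (f ((n % p ^ t₀ : ℕ) : ℤ_[p])))) *
        F.eval (n : ℚ_[p]) := by
    funext n
    show (padicL p l (f n) : ℚ_[p]) = _
    rw [coe_padicL hl0 (hroot _), hnu _ _ (Nat.mod_modEq n _), hF n, PadicInt.coe_natCast]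
  rw [hseq]
  exact isKRegular_mod_mul_eval k (pow_pos (Fact.out : p.Prime).pos t₀)
    (fun r => (p : ℚ_[p]) ^ (-((l : ℤ) * nuPow p l (f r)))) F

/-- If the nonzero analytic `f` has no root in `ℤ_p` then
`(ν_{p^l}(f(n)))_n` and `(ℓ_{p^l,d}(f(n)))_n` are purely periodic with a power of `p`
as a period, and for polynomial `f` the sequence `(ℒ_{p^l}(f(n)))_n` is `k`-regular
for every `k ≥ 2`. -/
theorem statement12 (p : ℕ) [Fact p.Prime] (l d : ℕ) (hl : 1 ≤ l) (hd : 1 ≤ d)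
    (f : ℤ_[p] → ℚ_[p]) (hfa : IsPadicAnalytic f) (hf0 : f ≠ 0)
    (hroot : ∀ θ : ℤ_[p], f θ ≠ 0) :
    (∃ t : ℕ, ∀ n : ℕ,
      nuPow p l (f ((n + p ^ t : ℕ) : ℤ_[p])) = nuPow p l (f (n : ℤ_[p]))) ∧
    ((∃ F : Polynomial ℚ_[p], ∀ x : ℤ_[p], f x = F.eval (x : ℚ_[p])) →
      ∀ k : ℕ, 2 ≤ k → IsKRegular k (fun n : ℕ => padicL p l (f (n : ℤ_[p])))) ∧
    (∃ t : ℕ, ∀ n : ℕ,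
      padicEll p l d (f ((n + p ^ t : ℕ) : ℤ_[p])) = padicEll p l d (f (n : ℤ_[p]))) :=
  statement12_general p l d hl f hfa hroot
end

section
/- Let p be a prime and θ, σ ∈ ℤ_p with θ ≠ σ. Then: (i) for every nonzero integer t there exist infinitely many n ∈ ℕ such that (n:ℤ_p) ≠ θ, (n:ℤ_p) ≠ σ, and ν_p(n − θ) = ν_p(n − σ) + t; (ii) for every integer δ ≥ 1 and every x ∈ {1, …, p^δ − 1} with p ∤ x and x (as a residue mod p^δ) different from ℓ_{p,δ}(θ − σ), there exist infinitely many n ∈ ℕ such that ℓ_{p,δ}(n − θ) = x and ℓ_{p,δ}(n − σ) = ℓ_{p,δ}(θ − σ). -/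
/-! Write `θ - σ = p^e u` with `u` a unit. If `n ≡ θ + p^(e+s) c (mod p^(e+s+r))` with `c` a unit
and `r ≥ 1`, then `n - θ = p^(e+s) v` with `v ≡ c (mod p^r)` a unit, while
`n - σ = p^e (u + p^s v)` with `u + p^s v ≡ u (mod p^s)` a unit. Taking `s = t`, `c = 1` gives (i)
(swapping `θ` and `σ` when `t < 0`); taking `s = r = δ`, `c = x` gives (ii). Each residue class
modulo `p^k` contains infinitely many naturals. -/

namespace PadicInt

variable {p : ℕ} [Fact p.Prime]

theorem valuation_eq_zero_of_isUnit {u : ℤ_[p]} (hu : IsUnit u) : u.valuation = 0 := by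
  obtain ⟨v, huv⟩ := hu.exists_right_inv
  have h := valuation_mul hu.ne_zero (right_ne_zero_of_mul_eq_one huv)
  rw [huv, valuation_one] at h
  omega

theorem valuation_p_pow_mul_of_isUnit (n : ℕ) {u : ℤ_[p]} (hu : IsUnit u) :
    ((p : ℤ_[p]) ^ n * u).valuation = n := by
  rw [valuation_p_pow_mul n u hu.ne_zero, valuation_eq_zero_of_isUnit hu, add_zero]

theorem exists_isUnit_eq_p_pow_valuation_mul {x : ℤ_[p]} (hx : x ≠ 0) :
    ∃ u : ℤ_[p], IsUnit u ∧ x = (p : ℤ_[p]) ^ x.valuation * u :=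
  ⟨_, (unitCoeff hx).isUnit, (unitCoeff_spec hx).trans (mul_comm _ _)⟩

theorem isUnit_add_p_pow_mul {u : ℤ_[p]} (hu : IsUnit u) {s : ℕ} (hs : s ≠ 0) (z : ℤ_[p]) :
    IsUnit (u + (p : ℤ_[p]) ^ s * z) := by
  obtain ⟨s, rfl⟩ := Nat.exists_eq_succ_of_ne_zero hs
  have hz : ‖(p : ℤ_[p]) ^ (s + 1) * z‖ < 1 := by
    rw [pow_succ', mul_assoc]
    exact mem_nonunits.mp (mul_mem_nonunits_left p_nonunit)
  rw [isUnit_iff] at hu ⊢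
  rw [norm_add_eq_max_of_ne (hu ▸ hz.ne'), hu, max_eq_left hz.le]

theorem toZModPow_add_p_pow_mul {k s : ℕ} (hks : k ≤ s) (u z : ℤ_[p]) :
    toZModPow k (u + (p : ℤ_[p]) ^ s * z) = toZModPow k u := by
  have hp : toZModPow k ((p : ℤ_[p]) ^ s) = 0 := by
    rw [map_pow, map_natCast, ← Nat.cast_pow, ZMod.natCast_eq_zero_iff]
    exact pow_dvd_pow p hks
  rw [map_add, map_mul, hp, zero_mul, add_zero]

theorem infinite_setOf_natCast_eq_add_p_pow_mul (a : ℤ_[p]) (k : ℕ) :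
    {n : ℕ | ∃ w : ℤ_[p], (n : ℤ_[p]) = a + (p : ℤ_[p]) ^ k * w}.Infinite := by
  have hmod : {n : ℕ | n ≡ (toZModPow k a).val [MOD p ^ k]}.Infinite :=
    Nat.frequently_atTop_iff_infinite.mp
      (Nat.frequently_modEq (pow_ne_zero _ (Fact.out : p.Prime).ne_zero) _)
  refine hmod.mono fun n hn => ?_
  have hker : (n : ℤ_[p]) - a ∈ Ideal.span {(p : ℤ_[p]) ^ k} := by
    rw [← ker_toZModPow, RingHom.mem_ker, map_sub, map_natCast,
      (ZMod.natCast_eq_natCast_iff _ _ _).mpr hn, ZMod.natCast_zmod_val, sub_self]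
  obtain ⟨w, hw⟩ := Ideal.mem_span_singleton.mp hker
  exact ⟨w, by rw [← hw]; ring⟩

theorem infinite_setOf_natCast_sub_eq_p_pow_mul (θ : ℤ_[p]) (s : ℕ) {r : ℕ} (hr : r ≠ 0)
    {c : ℤ_[p]} (hc : IsUnit c) :
    {n : ℕ | ∃ v : ℤ_[p], IsUnit v ∧ toZModPow r v = toZModPow r c ∧
      (n : ℤ_[p]) - θ = (p : ℤ_[p]) ^ s * v}.Infinite := by
  refine (infinite_setOf_natCast_eq_add_p_pow_mul (θ + (p : ℤ_[p]) ^ s * c) (s + r)).mono ?_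
  rintro n ⟨w, hw⟩
  exact ⟨c + (p : ℤ_[p]) ^ r * w, isUnit_add_p_pow_mul hc hr w,
    toZModPow_add_p_pow_mul le_rfl c w, by rw [hw, pow_add]; ring⟩

end PadicInt

open PadicInt

section

variable {p : ℕ} [Fact p.Prime]

theorem coe_padicL_one {x : ℚ_[p]} (hx : x ≠ 0) :
    (padicL p 1 x : ℚ_[p]) = (p : ℚ_[p]) ^ (-x.valuation) * x := by
  simp only [padicL, hx, one_ne_zero, or_self, ↓reduceDIte, nuPow, Nat.cast_one, Int.ediv_one,
    one_mul]

theorem padicL_one_p_pow_mul (n : ℕ) {u : ℤ_[p]} (hu : IsUnit u) :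
    padicL p 1 (((p : ℤ_[p]) ^ n * u : ℤ_[p]) : ℚ_[p]) = u := by
  have hp : (p : ℚ_[p]) ≠ 0 := Nat.cast_ne_zero.mpr (NeZero.ne p)
  have hx : (((p : ℤ_[p]) ^ n * u : ℤ_[p]) : ℚ_[p]) ≠ 0 :=
    coe_ne_zero.mpr (mul_ne_zero (pow_ne_zero n (NeZero.ne _)) hu.ne_zero)
  apply Subtype.ext
  rw [coe_padicL_one hx, valuation_coe, valuation_p_pow_mul_of_isUnit n hu, zpow_neg,
    zpow_natCast]
  push_cast
  rw [inv_mul_cancel_left₀ (pow_ne_zero _ hp)]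

theorem padicEll_one_p_pow_mul (δ n : ℕ) {u : ℤ_[p]} (hu : IsUnit u) :
    padicEll p 1 δ (((p : ℤ_[p]) ^ n * u : ℤ_[p]) : ℚ_[p]) = toZModPow (1 * δ) u := by
  rw [padicEll, padicL_one_p_pow_mul n hu]

theorem infinite_setOf_valuation_sub_eq_add {θ σ : ℤ_[p]} (hθσ : θ ≠ σ) {t : ℕ} (ht : t ≠ 0) :
    {n : ℕ | (n : ℤ_[p]) ≠ θ ∧ (n : ℤ_[p]) ≠ σ ∧
      ((n : ℤ_[p]) - θ).valuation = ((n : ℤ_[p]) - σ).valuation + t}.Infinite := by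
  obtain ⟨u, hu, hθσ_eq⟩ := exists_isUnit_eq_p_pow_valuation_mul (sub_ne_zero.mpr hθσ)
  set e := (θ - σ).valuation
  refine (infinite_setOf_natCast_sub_eq_p_pow_mul θ (e + t) one_ne_zero isUnit_one).mono ?_
  rintro n ⟨v, hv, -, hnθ⟩
  have hnσ : (n : ℤ_[p]) - σ = (p : ℤ_[p]) ^ e * (u + (p : ℤ_[p]) ^ t * v) := by
    rw [pow_add] at hnθ
    linear_combination hnθ + hθσ_eq
  have hw := isUnit_add_p_pow_mul hu ht v
  refine ⟨sub_ne_zero.mp ?_, sub_ne_zero.mp ?_, ?_⟩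
  · rw [hnθ]; exact mul_ne_zero (pow_ne_zero _ (NeZero.ne _)) hv.ne_zero
  · rw [hnσ]; exact mul_ne_zero (pow_ne_zero _ (NeZero.ne _)) hw.ne_zero
  · rw [hnθ, hnσ, valuation_p_pow_mul_of_isUnit _ hv, valuation_p_pow_mul_of_isUnit _ hw]

theorem infinite_setOf_padicEll_sub_eq {θ σ : ℤ_[p]} (hθσ : θ ≠ σ) {δ : ℕ} (hδ : δ ≠ 0)
    {c : ℤ_[p]} (hc : IsUnit c) :
    {n : ℕ | padicEll p 1 δ (((n : ℤ_[p]) - θ : ℤ_[p]) : ℚ_[p]) = toZModPow (1 * δ) c ∧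
      padicEll p 1 δ (((n : ℤ_[p]) - σ : ℤ_[p]) : ℚ_[p])
        = padicEll p 1 δ ((θ - σ : ℤ_[p]) : ℚ_[p])}.Infinite := by
  obtain ⟨u, hu, hθσ_eq⟩ := exists_isUnit_eq_p_pow_valuation_mul (sub_ne_zero.mpr hθσ)
  set e := (θ - σ).valuation
  refine (infinite_setOf_natCast_sub_eq_p_pow_mul θ (e + δ) (r := 1 * δ) (by omega) hc).mono ?_
  rintro n ⟨v, hv, hvc, hnθ⟩
  have hnσ : (n : ℤ_[p]) - σ = (p : ℤ_[p]) ^ e * (u + (p : ℤ_[p]) ^ δ * v) := by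
    rw [pow_add] at hnθ
    linear_combination hnθ + hθσ_eq
  refine ⟨?_, ?_⟩
  · rw [hnθ, padicEll_one_p_pow_mul _ _ hv, hvc]
  · rw [hnσ, hθσ_eq, padicEll_one_p_pow_mul _ _ (isUnit_add_p_pow_mul hu hδ v),
      padicEll_one_p_pow_mul _ _ hu, toZModPow_add_p_pow_mul (by omega)]

end

/-- Given distinct `θ, σ ∈ ℤ_p`: (i) for every nonzero `t ∈ ℤ` there
are infinitely many `n` with `ν_p(n-θ) = ν_p(n-σ) + t`; (ii) for suitable `x` there are
infinitely many `n` with `ℓ_{p,δ}(n-θ) = x` and `ℓ_{p,δ}(n-σ) = ℓ_{p,δ}(θ-σ)`. -/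
theorem statement14 (p : ℕ) [Fact p.Prime] (θ σ : ℤ_[p]) (hθσ : θ ≠ σ) :
    (∀ t : ℤ, t ≠ 0 →
      {n : ℕ | (n : ℤ_[p]) ≠ θ ∧ (n : ℤ_[p]) ≠ σ ∧
        ((n : ℤ_[p]) - θ).valuation = ((n : ℤ_[p]) - σ).valuation + t}.Infinite) ∧
    (∀ δ : ℕ, 1 ≤ δ → ∀ x : ℕ, 1 ≤ x → x ≤ p ^ δ - 1 → ¬ p ∣ x →
      (x : ZMod (p ^ (1 * δ))) ≠ padicEll p 1 δ ((θ - σ : ℤ_[p]) : ℚ_[p]) →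
      {n : ℕ | padicEll p 1 δ ((((n : ℤ_[p]) - θ : ℤ_[p]) : ℚ_[p]))
          = (x : ZMod (p ^ (1 * δ))) ∧
        padicEll p 1 δ ((((n : ℤ_[p]) - σ : ℤ_[p]) : ℚ_[p]))
          = padicEll p 1 δ ((θ - σ : ℤ_[p]) : ℚ_[p])}.Infinite) := by
  refine ⟨fun t ht => ?_, fun δ hδ x _ _ hpx _ => ?_⟩
  · rcases ht.lt_or_gt with hneg | hpos
    · refine (infinite_setOf_valuation_sub_eq_add hθσ.symm (t := t.natAbs) (by omega)).mono ?_
      rintro n ⟨hσ, hθ, hval⟩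
      exact ⟨hθ, hσ, by omega⟩
    · refine (infinite_setOf_valuation_sub_eq_add hθσ (t := t.natAbs) (by omega)).mono ?_
      rintro n ⟨hθ, hσ, hval⟩
      exact ⟨hθ, hσ, by omega⟩
  · have hx : IsUnit (x : ℤ_[p]) :=
      isUnit_iff.mpr <| norm_natCast_eq_one_iff.mpr <|
        (Nat.Prime.coprime_iff_not_dvd Fact.out).mpr hpx
    simpa only [map_natCast] using infinite_setOf_padicEll_sub_eq hθσ (by omega) hx
end

section
/- Let p be a prime, t ≥ 1, u ≥ 1, m ≥ 1 integers with u not dividing m, c ∈ ℚ_p nonzero, and θ ∈ ℤ_p not equal to the image of any natural number. Then the sequence (ν_{p^t}(c·(n−θ)^m) mod u)_{n≥0}, with values in ℤ/uℤ, is not eventually periodic. -/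
section

variable {p : ℕ} [hp : Fact p.Prime]

namespace Padic

theorem ne_zero_of_norm_eq_zpow {x : ℚ_[p]} {k : ℤ} (h : ‖x‖ = (p : ℝ) ^ k) : x ≠ 0 :=
  norm_pos_iff.mp (h ▸ zpow_pos (by exact_mod_cast hp.out.pos) _)

theorem valuation_eq_of_norm_eq_s15 {x : ℚ_[p]} {k : ℤ} (h : ‖x‖ = (p : ℝ) ^ (-k)) :
    x.valuation = k := by
  rw [norm_eq_zpow_neg_valuation (ne_zero_of_norm_eq_zpow h)] at h
  simpa using zpow_right_injective₀ (by exact_mod_cast hp.out.pos)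
    (by exact_mod_cast hp.out.one_lt.ne') h

end Padic

namespace PadicInt

theorem exists_natCast_sub_norm_eq (θ : ℤ_[p]) (K N : ℕ) :
    ∃ n : ℕ, N ≤ n ∧ ‖(n : ℤ_[p]) - θ‖ = (p : ℝ) ^ (-K : ℤ) := by
  -- `n₀ ≡ θ mod p^(K+1)`; adding `p^K` times the unit `1 + pN` makes `ν_p(n - θ)` exactly `K`.
  set n₀ := θ.appr (K + 1)
  refine ⟨n₀ + p ^ K * (1 + p * N), ?_, ?_⟩
  · have := Nat.le_mul_of_pos_left N hp.out.pos
    have := Nat.le_mul_of_pos_left (1 + p * N) (pow_pos hp.out.pos K)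
    omega
  have hfar : ‖(n₀ : ℤ_[p]) - θ‖ < (p : ℝ) ^ (-K : ℤ) := by
    have := (norm_le_pow_iff_mem_span_pow _ (K + 1)).mpr (by
      rw [← neg_mem_iff, neg_sub]; exact appr_spec (K + 1) θ)
    exact this.trans_lt (zpow_lt_zpow_right₀ (by exact_mod_cast hp.out.one_lt) (by omega))
  have hunit : ‖((1 + p * N : ℕ) : ℤ_[p])‖ = 1 :=
    norm_natCast_eq_one_iff.mpr (by simp)
  have hnear : ‖((p ^ K * (1 + p * N) : ℕ) : ℤ_[p])‖ = (p : ℝ) ^ (-K : ℤ) := by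
    rw [Nat.cast_mul, norm_mul, hunit, mul_one, Nat.cast_pow, norm_p_pow]
  rw [Nat.cast_add, add_sub_right_comm, IsUltrametricDist.norm_add_eq_max_of_norm_ne_norm
    (hnear ▸ hfar.ne), hnear, max_eq_right hfar.le]

end PadicInt

theorem exists_norm_eq_of_periodic {α : Type*} (F : ℚ_[p] → α) (θ : ℤ_[p]) {T N K : ℕ}
    (hper : ∀ n : ℕ, N ≤ n → F (((n + T : ℕ) : ℚ_[p]) - θ) = F ((n : ℚ_[p]) - θ))
    (hK : (p : ℝ) ^ (-K : ℤ) < ‖(T : ℚ_[p])‖) :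
    ∃ x y : ℚ_[p], ‖x‖ = (p : ℝ) ^ (-K : ℤ) ∧ ‖y‖ = ‖(T : ℚ_[p])‖ ∧ F x = F y := by
  obtain ⟨n, hn, hnorm⟩ := PadicInt.exists_natCast_sub_norm_eq θ K N
  have hx : ‖(n : ℚ_[p]) - θ‖ = (p : ℝ) ^ (-K : ℤ) := by
    simpa [PadicInt.norm_def] using hnorm
  refine ⟨(n : ℚ_[p]) - θ, ((n + T : ℕ) : ℚ_[p]) - θ, hx, ?_, (hper n hn).symm⟩
  rw [Nat.cast_add, add_sub_right_comm, IsUltrametricDist.norm_add_eq_max_of_norm_ne_norm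
    (hx ▸ hK.ne), hx, max_eq_right hK.le]

theorem nuPow_mul_pow_of_norm_eq (t m : ℕ) {c x : ℚ_[p]} (hc : c ≠ 0) {k : ℤ}
    (hx : ‖x‖ = (p : ℝ) ^ (-k)) : nuPow p t (c * x ^ m) = (c.valuation + m * k) / t := by
  rw [nuPow, Padic.valuation_mul hc (pow_ne_zero _ (Padic.ne_zero_of_norm_eq_zpow hx)),
    Padic.valuation_pow, Padic.valuation_eq_of_norm_eq_s15 hx]

end

theorem statement15_general (p : ℕ) [Fact p.Prime] (t u m : ℕ) (ht : 1 ≤ t)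
    (hum : ¬ u ∣ m) (c : ℚ_[p]) (hc : c ≠ 0) (θ : ℤ_[p]) :
    ¬ EventuallyPeriodic
      (fun n : ℕ => ((nuPow p t (c * ((n : ℚ_[p]) - (θ : ℚ_[p])) ^ m) : ZMod u))) := by
  rintro ⟨T, hT, N, hper⟩
  set s := (T : ℚ_[p]).valuation
  have hTnorm : ‖(T : ℚ_[p])‖ = (p : ℝ) ^ (-s) :=
    Padic.norm_eq_zpow_neg_valuation (by exact_mod_cast (by omega : T ≠ 0))
  have key : ∀ K : ℕ, s < K →
      (((c.valuation + m * K) / t : ℤ) : ZMod u) = (((c.valuation + m * s) / t : ℤ) : ZMod u) := by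
    intro K hK
    have hlt : (p : ℝ) ^ (-K : ℤ) < ‖(T : ℚ_[p])‖ := by
      rw [hTnorm]
      exact zpow_lt_zpow_right₀ (by exact_mod_cast (Fact.out : p.Prime).one_lt) (by omega)
    obtain ⟨x, y, hx, hy, hxy⟩ := exists_norm_eq_of_periodic
      (fun x => ((nuPow p t (c * x ^ m) : ℤ) : ZMod u)) θ hper hlt
    rw [hTnorm] at hy
    simpa only [nuPow_mul_pow_of_norm_eq t m hc hx, nuPow_mul_pow_of_norm_eq t m hc hy] using hxy
  obtain ⟨K, hK⟩ : ∃ K : ℕ, s < K := ⟨s.toNat + 1, by omega⟩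
  have hshift : (c.valuation + m * ((K + t : ℕ) : ℤ)) / t = (c.valuation + m * K) / t + m := by
    push_cast
    rw [mul_add, ← add_assoc, Int.add_mul_ediv_right _ _ (by omega)]
  have hmu : ((m : ℤ) : ZMod u) = 0 := by
    have h := key (K + t) (by omega)
    rw [hshift, Int.cast_add, key K hK] at h
    simpa using h
  exact hum ((ZMod.intCast_zmod_eq_zero_iff_dvd _ _).mp hmu |> Int.natCast_dvd_natCast.mp)

/-- If `u ∤ m` and `θ ∈ ℤ_p` is not a natural number, the sequence
`(ν_{p^t}(c(n-θ)^m) mod u)_n` is not eventually periodic. -/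
theorem statement15 (p : ℕ) [Fact p.Prime] (t u m : ℕ) (ht : 1 ≤ t) (hu : 1 ≤ u)
    (hm : 1 ≤ m) (hum : ¬ u ∣ m) (c : ℚ_[p]) (hc : c ≠ 0) (θ : ℤ_[p])
    (hθ : ∀ n : ℕ, θ ≠ (n : ℤ_[p])) :
    ¬ EventuallyPeriodic
      (fun n : ℕ => ((nuPow p t (c * ((n : ℚ_[p]) - (θ : ℚ_[p])) ^ m) : ZMod u))) :=
  statement15_general p t u m ht hum c hc θ
end

section
/- Let b ≥ 2 be an integer and q = v/u a rational number written in lowest terms with u > 0 and gcd(u, b) = 1. For each t ∈ ℕ let r_t be the unique integer with 0 ≤ r_t < b^t and u·r_t ≡ v (mod b^t), and set s_t = (q − r_t)/b^t ∈ ℚ. Then the sequence (s_t)_{t≥0} is eventually periodic, i.e., there exist T ≥ 1 and N ∈ ℕ such that s_{t+T} = s_t for all t ≥ N. -/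
/-- The tails `s_t = (q - r_t)/b^t` of the base-`b` expansion of a
rational `q = v/u` (in lowest terms, `gcd(u,b) = 1`) form an eventually periodic
sequence, where `r_t` is the unique residue `0 ≤ r_t < b^t` with `u·r_t ≡ v (mod b^t)`. -/
theorem statement19 (b : ℕ) (hb : 2 ≤ b) (v : ℤ) (u : ℕ) (hu : 0 < u)
    (hred : Int.gcd v (u : ℤ) = 1) (hub : Nat.Coprime u b)
    (r : ℕ → ℕ) (hrlt : ∀ t : ℕ, r t < b ^ t)
    (hrcong : ∀ t : ℕ, (u : ℤ) * (r t : ℤ) ≡ v [ZMOD ((b : ℤ) ^ t)]) :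
    ∃ T : ℕ, 1 ≤ T ∧ ∃ N : ℕ, ∀ t : ℕ, N ≤ t →
      ((v : ℚ) / (u : ℚ) - (r (t + T) : ℚ)) / (b : ℚ) ^ (t + T)
        = ((v : ℚ) / (u : ℚ) - (r t : ℚ)) / (b : ℚ) ^ t := by
  have hbz : (1:ℤ) < (b:ℤ) := by exact_mod_cast hb
  have hbpos : ∀ t : ℕ, (0:ℤ) < (b:ℤ) ^ t := fun t => by positivity
  have hrtlt : ∀ t : ℕ, (r t : ℤ) < (b:ℤ) ^ t := fun t => by exact_mod_cast hrlt t
  set A : ℕ → ℤ := fun t => (v - u * r t) / (b:ℤ) ^ t with hA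
  have hdvd : ∀ t, ((b:ℤ) ^ t) ∣ (v - u * r t) := fun t => (hrcong t).dvd
  have hAe : ∀ t, A t * (b:ℤ) ^ t = v - u * r t := fun t =>
    Int.ediv_mul_cancel (hdvd t)
  -- step: A (t+1) is determined by A t
  have hstep : ∀ t, ∃ c : ℤ, 0 ≤ c ∧ c < b ∧ A (t+1) * b = A t - u * c := by
    intro t
    have h1 : (b:ℤ) ^ t ∣ ((r (t+1) : ℤ) - r t) := by
      have ha : (u:ℤ) * r (t+1) ≡ (u:ℤ) * r t [ZMOD (b:ℤ) ^ t] :=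
        ((hrcong (t+1)).of_dvd (pow_dvd_pow _ (Nat.le_succ t))).trans (hrcong t).symm
      have hd : (b:ℤ) ^ t ∣ (u:ℤ) * ((r t : ℤ) - r (t+1)) := by
        have := ha.dvd
        convert this using 1; ring
      have hg : Int.gcd ((b:ℤ)^t) (u:ℤ) = 1 := by
        have h3 : Nat.Coprime (b ^ t) u := (hub.pow_right t).symm
        have h2 : ((b:ℤ)^t) = ((b ^ t : ℕ) : ℤ) := by push_cast; ring
        rw [h2, Int.gcd_natCast_natCast]; exact h3
      have h4 := Int.dvd_of_dvd_mul_right_of_gcd_one hd hg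
      exact dvd_sub_comm.mp h4
    obtain ⟨c, hc⟩ := h1
    refine ⟨c, ?_, ?_, ?_⟩
    · -- 0 ≤ c : since r(t+1) - r t > -b^t
      by_contra hneg
      push_neg at hneg
      have hle : c ≤ -1 := by omega
      have h5 : (b:ℤ)^t * c ≤ (b:ℤ)^t * (-1) :=
        mul_le_mul_of_nonneg_left hle (le_of_lt (hbpos t))
      have hrt := hrtlt t
      have hr1 : (0:ℤ) ≤ r (t+1) := Int.natCast_nonneg _
      nlinarith [hc]
    · -- c < b : since r(t+1) < b^(t+1)
      by_contra hge
      push_neg at hge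
      have h5 : (b:ℤ)^t * (b:ℤ) ≤ (b:ℤ)^t * c :=
        mul_le_mul_of_nonneg_left hge (le_of_lt (hbpos t))
      have hr1 := hrtlt (t+1)
      have hrt : (0:ℤ) ≤ r t := Int.natCast_nonneg _
      have hpow : (b:ℤ)^(t+1) = (b:ℤ)^t * b := by ring
      nlinarith [hc]
    · -- the recurrence
      have h1 := hAe (t+1)
      have h2 := hAe t
      have hne : ((b:ℤ)^t) ≠ 0 := (hbpos t).ne'
      apply mul_right_cancel₀ hne
      linear_combination h1 - h2 - (u:ℤ) * hc
  -- determinism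
  have hdet : ∀ t1 t2, A t1 = A t2 → A (t1+1) = A (t2+1) := by
    intro t1 t2 h
    obtain ⟨c1, hc1, hc1b, he1⟩ := hstep t1
    obtain ⟨c2, hc2, hc2b, he2⟩ := hstep t2
    have hcc : c1 = c2 := by
      have hd : (b:ℤ) ∣ (u:ℤ) * (c1 - c2) := ⟨A (t2+1) - A (t1+1), by
        rw [h] at he1; linear_combination he1 - he2⟩
      have hg : Int.gcd (b:ℤ) (u:ℤ) = 1 := by
        rw [Int.gcd_natCast_natCast]; exact hub.symm
      have hd2 : (b:ℤ) ∣ (c1 - c2) := Int.dvd_of_dvd_mul_right_of_gcd_one hd hg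
      have hz : c1 - c2 = 0 := by
        rcases hd2 with ⟨k, hk⟩
        have hbpos' : (0:ℤ) < b := by omega
        rcases lt_trichotomy k 0 with hk0 | hk0 | hk0
        · have : (b:ℤ) * k ≤ (b:ℤ) * (-1) :=
            mul_le_mul_of_nonneg_left (by omega) (le_of_lt hbpos')
          omega
        · rw [hk0, mul_zero] at hk; exact hk
        · have : (b:ℤ) * 1 ≤ (b:ℤ) * k :=
            mul_le_mul_of_nonneg_left (by omega) (le_of_lt hbpos')
          omega
      omega
    have hbne : ((b:ℤ)) ≠ 0 := by omega
    apply mul_right_cancel₀ hbne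
    rw [he1, he2, h, hcc]
  -- bound : |A t| ≤ u + |v|
  obtain ⟨M, hM0, hbound⟩ : ∃ M : ℤ, 0 ≤ M ∧ ∀ t, A t ∈ Finset.Icc (-M) M := by
    refine ⟨(u:ℤ) + |v|, by positivity, fun t => ?_⟩
    have h := hAe t
    have h1 : (1:ℤ) ≤ (b:ℤ)^t := hbpos t
    have hrt0 : (0:ℤ) ≤ r t := Int.natCast_nonneg _
    have hrt := hrtlt t
    have hv1 : v ≤ |v| := le_abs_self v
    have hv2 : -|v| ≤ v := neg_abs_le v
    have habs : (0:ℤ) ≤ |v| := abs_nonneg v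
    rw [Finset.mem_Icc]
    constructor
    · have key : -((u:ℤ) + |v|) * (b:ℤ)^t ≤ A t * (b:ℤ)^t := by
        nlinarith [mul_le_mul_of_nonneg_right habs (le_of_lt (hbpos t)),
          mul_le_mul_of_nonneg_right (le_of_lt hrt) (show (0:ℤ) ≤ u by positivity)]
      exact le_of_mul_le_mul_right key (hbpos t)
    · have key : A t * (b:ℤ)^t ≤ ((u:ℤ) + |v|) * (b:ℤ)^t := by
        nlinarith [mul_le_mul_of_nonneg_left h1 (show (0:ℤ) ≤ (u:ℤ) + |v| by positivity),
          mul_le_mul_of_nonneg_right hrt0 (show (0:ℤ) ≤ u by positivity)]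
      exact le_of_mul_le_mul_right key (hbpos t)
  -- pigeonhole
  have hcard : (Finset.Icc (-M) M).card < (Finset.range ((2*M).toNat + 2)).card := by
    rw [Int.card_Icc, Finset.card_range]
    omega
  obtain ⟨t1, _, t2, _, hne, heq⟩ :=
    Finset.exists_ne_map_eq_of_card_lt_of_maps_to hcard (fun t _ => hbound t)
  -- wlog t1 < t2
  obtain ⟨t1, t2, hlt, heq⟩ : ∃ t1 t2, t1 < t2 ∧ A t1 = A t2 := by
    rcases lt_or_gt_of_ne hne with h | h
    · exact ⟨t1, t2, h, heq⟩
    · exact ⟨t2, t1, h, heq.symm⟩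
  have hper : ∀ k, A (t1 + k) = A (t2 + k) := by
    intro k
    induction k with
    | zero => exact heq
    | succ k ih => exact hdet _ _ ih
  -- conversion to ℚ
  have key : ∀ s : ℕ, ((v:ℚ)/u - r s)/(b:ℚ)^s = (A s : ℚ)/u := by
    intro s
    have h := hAe s
    have hu' : (u:ℚ) ≠ 0 := Nat.cast_ne_zero.mpr hu.ne'
    have hb' : ((b:ℚ))^s ≠ 0 := by positivity
    have hq : (A s : ℚ) * (b:ℚ)^s = v - u * r s := by exact_mod_cast h
    rw [div_eq_div_iff hb' hu', sub_mul, div_mul_cancel₀ _ hu']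
    linear_combination -hq
  refine ⟨t2 - t1, by omega, t1, fun t ht => ?_⟩
  rw [key, key]
  congr 1
  have h1 : t + (t2 - t1) = t2 + (t - t1) := by omega
  have h2 : t = t1 + (t - t1) := by omega
  rw [h1, ← hper (t - t1), ← h2]
end
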